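/- There exist 2^{ℵ₀} (continuum many) distinct sequences (a_n)_{n∈ℕ} of positive integers that arise as associative spectra of binary groupoids, where the associative spectrum of a groupoid A is the sequence whose n-th entry is the number of distinct term functions induced by bracketings with n operation occurrences. -/

import Mathlib

/-- p-ary bracketings: terms over one variable `x` with one p-ary operation symbol `ω`. -/
inductive Brack (p : ℕ) : Type
  | x : Brack p
  | node : (Fin p → Brack p) → Brack p

namespace Brack

/-- occurrence number: number of occurrences of ω -/
def occ {p : ℕ} : Brack p → ℕ
  | .x => 0
  | .node f => 1 + ∑ i, occ (f i)

/-- length: number of occurrences of x -/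
def len {p : ℕ} : Brack p → ℕ
  | .x => 1
  | .node f => ∑ i, len (f i)

/-- evaluation of a bracketing in a groupoid, variables enumerated left-to-right
starting at position `j`. -/
def evalFrom {p : ℕ} {A : Type*} (op : (Fin p → A) → A) (v : ℕ → A) :
    Brack p → ℕ → A
  | .x, j => v j
  | .node f, j =>
      op (fun i => evalFrom op v (f i)
        (j + ∑ k ∈ Finset.univ.filter (· < i), len (f k)))

/-- the term function induced by a bracketing -/
def eval {p : ℕ} {A : Type*} (op : (Fin p → A) → A) (t : Brack p) (v : ℕ → A) : A :=
  evalFrom op v t 0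

/-- prefix word of a bracketing: `true` codes ω, `false` codes x -/
def word {p : ℕ} : Brack p → List Bool
  | .x => [false]
  | .node f => true :: (List.ofFn (fun i => word (f i))).flatten

/-- auxiliary: scan a word, recording 1 + number of x's before each ω -/
def STaux : List Bool → ℕ → List ℕ
  | [], _ => []
  | true :: w, c => (c + 1) :: STaux w c
  | false :: w, c => STaux w (c + 1)

/-- insertion tuple of a bracketing: the i-th entry is one plus the number
of x's preceding the i-th occurrence of ω in the prefix notation -/
def ST {p : ℕ} (t : Brack p) : List ℕ := STaux (word t) 0

/-- replace the i-th (0-based) occurrence of x in `t` by `s` -/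
def replaceLeaf {p : ℕ} : Brack p → ℕ → Brack p → Brack p
  | .x, i, s => if i = 0 then s else .x
  | .node f, i, s => .node (fun j =>
      let off := ∑ k ∈ Finset.univ.filter (· < j), len (f k)
      if off ≤ i ∧ i < off + len (f j) then replaceLeaf (f j) (i - off) s else f j)

/-- β_i : insertion of ω x … x at the i-th (1-based) occurrence of x -/
def beta {p : ℕ} (i : ℕ) (t : Brack p) : Brack p :=
  replaceLeaf t (i - 1) (.node (fun _ => .x))

/-- left depth: depth of leftmost leaf (binary case) -/
def dl : Brack 2 → ℕ
  | .x => 0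
  | .node f => dl (f 0) + 1

/-- right depth: depth of rightmost leaf (binary case) -/
def dr : Brack 2 → ℕ
  | .x => 0
  | .node f => dr (f 1) + 1

/-- left factor of a binary bracketing -/
def leftF : Brack 2 → Brack 2
  | .x => .x
  | .node f => f 0

/-- whether a bracketing is the single variable x -/
def isX {p : ℕ} : Brack p → Bool
  | .x => true
  | .node _ => false

/-- number of pairs of eggs, i.e. subterm occurrences of ω x x (binary case) -/
def eggs : Brack 2 → ℕ
  | .x => 0
  | .node f => (if isX (f 0) && isX (f 1) then 1 else 0) + eggs (f 0) + eggs (f 1)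

end Brack

/-- generalized Catalan numbers -/
def genCat (p : ℕ) : ℕ → ℕ
  | 0 => 1
  | n + 1 =>
      ∑ v ∈ (Finset.Nat.antidiagonalTuple p n).attach, ∏ k : Fin p, genCat p (v.1 k)
  decreasing_by
    have hv := Finset.Nat.mem_antidiagonalTuple.mp v.2
    have hle : v.1 k ≤ n := by
      calc v.1 k ≤ ∑ i, v.1 i :=
            Finset.single_le_sum (fun i _ => Nat.zero_le _) (Finset.mem_univ k)
        _ = n := hv
    omega

/-- the set M(n,k,p) of weakly increasing n-tuples of positive integers
with u_i ≤ (p-1)(i-1)+k (here indices are 0-based) -/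
def Mset (n k p : ℕ) : Set (Fin n → ℕ) :=
  {u | (∀ i : Fin n, 1 ≤ u i ∧ u i ≤ (p - 1) * (i : ℕ) + k) ∧
    ∀ i j : Fin n, i ≤ j → u i ≤ u j}

/-- the setoid of equality of induced term functions on bracketings with n occurrences -/
def tfSetoid {A : Type} (op : (Fin 2 → A) → A) (n : ℕ) :
    Setoid {t : Brack 2 // Brack.occ t = n} :=
  ⟨fun s t => ∀ v : ℕ → A, Brack.eval op s.1 v = Brack.eval op t.1 v,
    ⟨fun _ _ => rfl, fun h v => (h v).symm, fun h1 h2 v => (h1 v).trans (h2 v)⟩⟩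


/-!
For `S ⊆ ℕ` forbid the patterns `pat 0` and `pat (k + 1)` for `k ∈ S`, where a pattern occurs in a
bracketing if some subterm is obtained from it by substituting bracketings for its leaves. On the
bracketings together with an absorbing `none`, let the product of `s` and `t` be the bracketing
`(s t)` if it avoids the forbidden patterns, and `none` otherwise. Pattern occurrences survive
substitution, so a bracketing containing a forbidden pattern evaluates to `none` under every
assignment, while one avoiding them evaluates to itself under the constant assignment `x`. Hence
for `n ≥ 4` the `n`-th spectrum entry is one more than the number of pattern-avoiding bracketings
with `n` operations. The patterns `pat a`, with `a + 4` operations, form an antichain, so if `S`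
and `S'` first differ at `m ∈ S' \ S`, these sets at level `m + 5` differ exactly by `pat (m + 1)`:
the map `S ↦ spectrum S` is injective on `Set ℕ`.
-/

namespace Brack

def node₂ (s t : Brack 2) : Brack 2 := .node ![s, t]

lemma node_eq_node₂ (f : Fin 2 → Brack 2) : node f = node₂ (f 0) (f 1) := by
  rw [node₂]; congr; funext i; fin_cases i <;> rfl

@[elab_as_elim]
theorem rec₂ {motive : Brack 2 → Prop} (x : motive .x)
    (node₂ : ∀ s t, motive s → motive t → motive (node₂ s t)) (t : Brack 2) : motive t := by
  induction t with
  | x => exact x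
  | node f ih => rw [node_eq_node₂]; exact node₂ _ _ (ih 0) (ih 1)

@[elab_as_elim]
theorem cases₂ {motive : Brack 2 → Prop} (x : motive .x)
    (node₂ : ∀ s t, motive (node₂ s t)) (t : Brack 2) : motive t :=
  rec₂ x (fun s t _ _ => node₂ s t) t

@[simp] lemma occ_x : occ (.x : Brack 2) = 0 := rfl

@[simp] lemma occ_node₂ (s t : Brack 2) : occ (node₂ s t) = occ s + occ t + 1 := by
  simp [node₂, occ, Fin.sum_univ_two]; omega

lemma evalFrom_node₂ {A : Type*} (op : (Fin 2 → A) → A) (v : ℕ → A) (s t : Brack 2) (j : ℕ) :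
    evalFrom op v (node₂ s t) j = op ![evalFrom op v s j, evalFrom op v t (j + len s)] := by
  rw [node₂, evalFrom]
  congr; funext i; fin_cases i
  · simp
  · simp [Finset.filter_eq']

lemma finite_setOf_occ_le (n : ℕ) : {t : Brack 2 | occ t ≤ n}.Finite := by
  induction n with
  | zero =>
    refine (Set.finite_singleton Brack.x).subset fun t ht => ?_
    cases t using cases₂ with
    | x => rfl
    | node₂ => simp at ht
  | succ n ih =>
    refine ((ih.image2 node₂ ih).insert .x).subset fun t ht => ?_
    cases t using cases₂ with
    | x => exact Set.mem_insert _ _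
    | node₂ s t =>
      simp only [Set.mem_ofPred_eq, occ_node₂] at ht
      exact Set.mem_insert_of_mem _ ⟨s, by simp; omega, t, by simp; omega, rfl⟩

lemma finite_setOf_occ_eq (n : ℕ) : {t : Brack 2 | occ t = n}.Finite :=
  (finite_setOf_occ_le n).subset fun _ ht => ht.le

def rightComb (n : ℕ) (t : Brack 2) : Brack 2 := (node₂ .x)^[n] t

@[simp] lemma rightComb_zero (t : Brack 2) : rightComb 0 t = t := rfl

@[simp] lemma rightComb_succ (n : ℕ) (t : Brack 2) :
    rightComb (n + 1) t = node₂ .x (rightComb n t) :=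
  Function.iterate_succ_apply' _ _ _

@[simp] lemma occ_rightComb (n : ℕ) (t : Brack 2) : occ (rightComb n t) = occ t + n := by
  induction n with
  | zero => rfl
  | succ n ih => simp [ih]; omega

lemma one_le_card_quotient_tfSetoid {A : Type} (op : (Fin 2 → A) → A) (n : ℕ) :
    1 ≤ Nat.card (Quotient (tfSetoid op n)) := by
  have : Finite {t : Brack 2 // occ t = n} := (finite_setOf_occ_eq n).to_subtype
  have : Nonempty (Quotient (tfSetoid op n)) := ⟨⟦⟨rightComb n .x, by simp⟩⟧⟩
  exact Nat.card_pos

/-- `Inst s t`: `t` is obtained from `s` by substituting bracketings for its leaves. -/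
def Inst : Brack 2 → Brack 2 → Prop
  | .x, _ => True
  | .node _, .x => False
  | .node f, .node g => Inst (f 0) (g 0) ∧ Inst (f 1) (g 1)

@[simp] lemma inst_x (t : Brack 2) : Inst .x t := trivial

@[simp] lemma not_inst_node₂_x (s t : Brack 2) : ¬ Inst (node₂ s t) .x := id

@[simp] lemma inst_node₂_node₂ {s t s' t' : Brack 2} :
    Inst (node₂ s t) (node₂ s' t') ↔ Inst s s' ∧ Inst t t' := Iff.rfl

lemma Inst.refl (t : Brack 2) : Inst t t := by
  induction t using rec₂ with
  | x => trivial
  | node₂ s t hs ht => exact ⟨hs, ht⟩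

lemma Inst.trans {s t u : Brack 2} (hst : Inst s t) (htu : Inst t u) : Inst s u := by
  induction s using rec₂ generalizing t u with
  | x => trivial
  | node₂ s₁ s₂ ih₁ ih₂ =>
    cases t using cases₂ with
    | x => exact absurd hst (not_inst_node₂_x _ _)
    | node₂ t₁ t₂ =>
      cases u using cases₂ with
      | x => exact absurd htu (not_inst_node₂_x _ _)
      | node₂ u₁ u₂ =>
        rw [inst_node₂_node₂] at hst htu ⊢
        exact ⟨ih₁ hst.1 htu.1, ih₂ hst.2 htu.2⟩

lemma Inst.occ_le {s t : Brack 2} (h : Inst s t) : occ s ≤ occ t := by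
  induction s using rec₂ generalizing t with
  | x => simp
  | node₂ s₁ s₂ ih₁ ih₂ =>
    cases t using cases₂ with
    | x => exact absurd h (not_inst_node₂_x _ _)
    | node₂ t₁ t₂ =>
      rw [inst_node₂_node₂] at h
      have := ih₁ h.1; have := ih₂ h.2; simp; omega

lemma Inst.eq_of_occ_le {s t : Brack 2} (h : Inst s t) (hle : occ t ≤ occ s) : s = t := by
  induction s using rec₂ generalizing t with
  | x =>
    cases t using cases₂ with
    | x => rfl
    | node₂ => simp at hle
  | node₂ s₁ s₂ ih₁ ih₂ =>
    cases t using cases₂ with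
    | x => exact absurd h (not_inst_node₂_x _ _)
    | node₂ t₁ t₂ =>
      rw [inst_node₂_node₂] at h
      have := h.1.occ_le; have := h.2.occ_le
      simp only [occ_node₂] at hle
      rw [ih₁ h.1 (by omega), ih₂ h.2 (by omega)]

/-- `Occurs p t`: some subterm of `t` is an instance of the pattern `p`. -/
def Occurs (p : Brack 2) : Brack 2 → Prop
  | .x => Inst p .x
  | .node f => Inst p (.node f) ∨ Occurs p (f 0) ∨ Occurs p (f 1)

@[simp] lemma occurs_x {p : Brack 2} : Occurs p .x ↔ Inst p .x := Iff.rfl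

@[simp] lemma occurs_node₂ {p s t : Brack 2} :
    Occurs p (node₂ s t) ↔ Inst p (node₂ s t) ∨ Occurs p s ∨ Occurs p t := Iff.rfl

lemma Inst.occurs {p t : Brack 2} (h : Inst p t) : Occurs p t := by
  cases t with
  | x => exact h
  | node f => exact Or.inl h

lemma Occurs.occ_le {p t : Brack 2} (h : Occurs p t) : occ p ≤ occ t := by
  induction t using rec₂ with
  | x => exact Inst.occ_le h
  | node₂ s t ihs iht =>
    rcases occurs_node₂.mp h with h | h | h
    · exact h.occ_le
    · have := ihs h; simp; omega
    · have := iht h; simp; omega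

lemma Occurs.eq_of_occ_le {p t : Brack 2} (h : Occurs p t) (hle : occ t ≤ occ p) : p = t := by
  cases t using cases₂ with
  | x => exact Inst.eq_of_occ_le h hle
  | node₂ s t =>
    rcases occurs_node₂.mp h with h | h | h
    · exact h.eq_of_occ_le hle
    · have := h.occ_le; simp at hle; omega
    · have := h.occ_le; simp at hle; omega

lemma Occurs.of_inst {p s u : Brack 2} (h : Occurs p s) (hsu : Inst s u) : Occurs p u := by
  induction s using rec₂ generalizing u with
  | x => exact (Inst.trans h hsu).occurs
  | node₂ s₁ s₂ ih₁ ih₂ =>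
    cases u using cases₂ with
    | x => exact absurd hsu (not_inst_node₂_x _ _)
    | node₂ u₁ u₂ =>
      rcases occurs_node₂.mp h with h | h | h
      · exact (h.trans hsu).occurs
      · exact occurs_node₂.mpr (Or.inr (Or.inl (ih₁ h (inst_node₂_node₂.mp hsu).1)))
      · exact occurs_node₂.mpr (Or.inr (Or.inr (ih₂ h (inst_node₂_node₂.mp hsu).2)))

lemma Occurs.rightComb {p t : Brack 2} (h : Occurs p t) (n : ℕ) : Occurs p (rightComb n t) := by
  induction n with
  | zero => exact h
  | succ n ih => rw [rightComb_succ]; exact occurs_node₂.mpr (Or.inr (Or.inr ih))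

def Avoids (P : Set (Brack 2)) (t : Brack 2) : Prop := ∀ p ∈ P, ¬ Occurs p t

section Avoids

variable {P : Set (Brack 2)}

lemma avoids_x (hx : .x ∉ P) : Avoids P .x := by
  intro p hp h
  cases p using cases₂ with
  | x => exact hx hp
  | node₂ => exact not_inst_node₂_x _ _ h

lemma Avoids.of_inst {t u : Brack 2} (hu : Avoids P u) (htu : Inst t u) : Avoids P t :=
  fun p hp h => hu p hp (h.of_inst htu)

lemma Avoids.left {s t : Brack 2} (h : Avoids P (node₂ s t)) : Avoids P s :=
  fun p hp hs => h p hp (Or.inr (Or.inl hs))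

lemma Avoids.right {s t : Brack 2} (h : Avoids P (node₂ s t)) : Avoids P t :=
  fun p hp ht => h p hp (Or.inr (Or.inr ht))

variable (P)

open Classical in
noncomputable def avoidOp (g : Fin 2 → Option (Brack 2)) : Option (Brack 2) :=
  match g 0, g 1 with
  | some s, some t => if Avoids P (node₂ s t) then some (node₂ s t) else none
  | _, _ => none

open Classical in
noncomputable def avoidCode (t : Brack 2) : Option (Brack 2) :=
  if Avoids P t then some t else none

def avoidingLevel (n : ℕ) : Set (Brack 2) := {t | occ t = n ∧ Avoids P t}

lemma finite_avoidingLevel (n : ℕ) : (avoidingLevel P n).Finite :=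
  (finite_setOf_occ_eq n).subset fun _ ht => ht.1

variable {P}

lemma eq_of_avoidOp_eq_some {g : Fin 2 → Option (Brack 2)} {u : Brack 2}
    (h : avoidOp P g = some u) :
    ∃ s t, g 0 = some s ∧ g 1 = some t ∧ u = node₂ s t ∧ Avoids P u := by
  unfold avoidOp at h
  split at h
  next s t h₀ h₁ =>
    split_ifs at h with hst
    cases h
    exact ⟨s, t, h₀, h₁, rfl, hst⟩
  next => cases h

lemma inst_of_evalFrom_eq_some {v : ℕ → Option (Brack 2)} {t u : Brack 2} {j : ℕ}
    (h : evalFrom (avoidOp P) v t j = some u) : Inst t u := by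
  induction t using rec₂ generalizing j u with
  | x => trivial
  | node₂ t₁ t₂ ih₁ ih₂ =>
    rw [evalFrom_node₂] at h
    obtain ⟨u₁, u₂, h₁, h₂, rfl, -⟩ := eq_of_avoidOp_eq_some h
    exact ⟨ih₁ h₁, ih₂ h₂⟩

lemma evalFrom_eq_none (hx : .x ∉ P) (v : ℕ → Option (Brack 2)) {t : Brack 2} (j : ℕ)
    (ht : ¬ Avoids P t) : evalFrom (avoidOp P) v t j = none := by
  cases t using cases₂ with
  | x => exact absurd (avoids_x hx) ht
  | node₂ t₁ t₂ =>
    refine Option.eq_none_iff_forall_ne_some.mpr fun u h => ht ?_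
    have hu := h
    rw [evalFrom_node₂] at hu
    obtain ⟨-, -, -, -, -, hu⟩ := eq_of_avoidOp_eq_some hu
    exact hu.of_inst (inst_of_evalFrom_eq_some h)

lemma evalFrom_const_x {t : Brack 2} (ht : Avoids P t) (j : ℕ) :
    evalFrom (avoidOp P) (fun _ => some .x) t j = some t := by
  induction t using rec₂ generalizing j with
  | x => rfl
  | node₂ t₁ t₂ ih₁ ih₂ =>
    rw [evalFrom_node₂, ih₁ ht.left, ih₂ ht.right]
    simp [avoidOp, ht]

lemma eval_const_x (hx : .x ∉ P) (t : Brack 2) :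
    eval (avoidOp P) t (fun _ => some .x) = avoidCode P t := by
  by_cases ht : Avoids P t
  · simp [eval, evalFrom_const_x ht, avoidCode, ht]
  · simp [eval, evalFrom_eq_none hx _ _ ht, avoidCode, ht]

lemma tfSetoid_avoidOp (hx : .x ∉ P) (n : ℕ) :
    tfSetoid (avoidOp P) n = Setoid.ker fun t => avoidCode P t.1 := by
  ext s t
  refine ⟨fun h => ?_, fun h v => ?_⟩
  · simpa [eval_const_x hx] using h fun _ => some .x
  · change avoidCode P s.1 = avoidCode P t.1 at h
    by_cases hs : Avoids P s.1 <;> by_cases ht : Avoids P t.1 <;> simp [avoidCode, hs, ht] at h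
    · rw [Subtype.ext h]
    · simp only [eval, evalFrom_eq_none hx v 0 hs, evalFrom_eq_none hx v 0 ht]

lemma card_quotient_tfSetoid_avoidOp (hx : .x ∉ P) {n : ℕ}
    (hbad : ∃ t, occ t = n ∧ ¬ Avoids P t) :
    Nat.card (Quotient (tfSetoid (avoidOp P) n)) = (avoidingLevel P n).ncard + 1 := by
  have hrange : Set.range (fun t : {t // occ t = n} => avoidCode P t.1) =
      insert none (some '' avoidingLevel P n) := by
    ext c
    constructor
    · rintro ⟨⟨t, rfl⟩, rfl⟩
      by_cases ht : Avoids P t <;> simp [avoidCode, avoidingLevel, ht]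
    · rintro (rfl | ⟨t, ⟨hn, ht⟩, rfl⟩)
      · obtain ⟨t, hn, ht⟩ := hbad
        exact ⟨⟨t, hn⟩, by simp [avoidCode, ht]⟩
      · exact ⟨⟨t, hn⟩, by simp [avoidCode, ht]⟩
  rw [tfSetoid_avoidOp hx, Nat.card_congr (Setoid.quotientKerEquivRange _), Nat.card_coe_set_eq,
    hrange, Set.ncard_insert_of_notMem (by simp) ((finite_avoidingLevel P n).image _),
    Set.ncard_image_of_injective _ (Option.some_injective _)]

end Avoids

def egg : Brack 2 := node₂ .x .x

@[simp] lemma occ_egg : occ egg = 1 := rfl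

def chain (a : ℕ) : Brack 2 := rightComb a (node₂ egg .x)

def pat (a : ℕ) : Brack 2 := node₂ egg (chain a)

@[simp] lemma occ_chain (a : ℕ) : occ (chain a) = a + 2 := by simp [chain, egg]; omega

@[simp] lemma occ_pat (a : ℕ) : occ (pat a) = a + 4 := by simp [pat]; omega

lemma not_inst_chain_chain {a b : ℕ} (h : a ≠ b) : ¬ Inst (chain a) (chain b) := by
  induction a generalizing b with
  | zero =>
    obtain ⟨b, rfl⟩ := Nat.exists_eq_succ_of_ne_zero h.symm
    simp [chain, egg]
  | succ a ih =>
    cases b with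
    | zero =>
      intro hi
      simp only [chain, rightComb_succ, rightComb_zero, inst_node₂_node₂] at hi
      simpa using hi.2.occ_le
    | succ b =>
      simp only [chain, rightComb_succ, inst_node₂_node₂, inst_x, true_and]
      exact ih (by omega)

lemma not_occurs_pat_chain (a j : ℕ) : ¬ Occurs (pat a) (chain j) := by
  induction j with
  | zero => intro h; have := h.occ_le; simp at this
  | succ j ih =>
    simp only [chain, rightComb_succ, occurs_node₂, occurs_x, not_or]
    exact ⟨by simp [pat, egg], fun h => by simpa using h.occ_le, ih⟩

lemma occurs_pat_pat_iff {a b : ℕ} : Occurs (pat a) (pat b) ↔ a = b := by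
  refine ⟨fun h => ?_, fun h => h ▸ (Inst.refl _).occurs⟩
  by_contra hab
  rcases occurs_node₂.mp h with h | h | h
  · exact not_inst_chain_chain hab (inst_node₂_node₂.mp h).2
  · simpa using h.occ_le
  · exact not_occurs_pat_chain a b h

def forbidden (S : Set ℕ) : Set (Brack 2) := insert (pat 0) ((fun k => pat (k + 1)) '' S)

lemma x_notMem_forbidden (S : Set ℕ) : .x ∉ forbidden S := by
  rintro (h | ⟨k, -, h⟩) <;> simpa using congrArg occ h

lemma exists_not_avoids_forbidden (S : Set ℕ) {n : ℕ} (hn : 4 ≤ n) :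
    ∃ t, occ t = n ∧ ¬ Avoids (forbidden S) t :=
  ⟨rightComb (n - 4) (pat 0), by simp; omega,
    fun h => h _ (Set.mem_insert _ _) ((Inst.refl _).occurs.rightComb _)⟩

lemma avoids_forbidden_pat {S : Set ℕ} {m : ℕ} (hm : m ∉ S) :
    Avoids (forbidden S) (pat (m + 1)) := by
  rintro p (rfl | ⟨k, hk, rfl⟩) hocc <;> rw [occurs_pat_pat_iff] at hocc
  · omega
  · obtain rfl : k = m := by omega
    exact hm hk

lemma avoids_forbidden_iff {S S' : Set ℕ} {m : ℕ} (hlt : ∀ k < m, k ∈ S ↔ k ∈ S')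
    (hm : m ∉ S) (hm' : m ∈ S') {t : Brack 2} (ht : occ t = m + 5) :
    Avoids (forbidden S') t ↔ Avoids (forbidden S) t ∧ t ≠ pat (m + 1) := by
  have hle {k : ℕ} (h : Occurs (pat (k + 1)) t) : k ≤ m := by
    have := h.occ_le; simp at this; omega
  constructor
  · intro h
    refine ⟨?_, ?_⟩
    · rintro p (rfl | ⟨k, hk, rfl⟩) hocc
      · exact h _ (Set.mem_insert _ _) hocc
      · have hkm : k < m := lt_of_le_of_ne (hle hocc) (by rintro rfl; exact hm hk)
        exact h _ (Set.mem_insert_of_mem _ ⟨k, (hlt k hkm).mp hk, rfl⟩) hocc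
    · rintro rfl
      exact h _ (Set.mem_insert_of_mem _ ⟨m, hm', rfl⟩) (Inst.refl _).occurs
  · rintro ⟨h, hne⟩ p (rfl | ⟨k, hk, rfl⟩) hocc
    · exact h _ (Set.mem_insert _ _) hocc
    · rcases (hle hocc).lt_or_eq with hkm | rfl
      · exact h _ (Set.mem_insert_of_mem _ ⟨k, (hlt k hkm).mpr hk, rfl⟩) hocc
      · exact hne (hocc.eq_of_occ_le (by simp [ht])).symm

noncomputable def spectrum (S : Set ℕ) (n : ℕ) : ℕ :=
  Nat.card (Quotient (tfSetoid (avoidOp (forbidden S)) n))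

lemma spectrum_eq_of_four_le (S : Set ℕ) {n : ℕ} (hn : 4 ≤ n) :
    spectrum S n = (avoidingLevel (forbidden S) n).ncard + 1 :=
  card_quotient_tfSetoid_avoidOp (x_notMem_forbidden S) (exists_not_avoids_forbidden S hn)

lemma spectrum_eq_spectrum_add_one {S S' : Set ℕ} {m : ℕ} (hlt : ∀ k < m, k ∈ S ↔ k ∈ S')
    (hm : m ∉ S) (hm' : m ∈ S') : spectrum S (m + 5) = spectrum S' (m + 5) + 1 := by
  have hlevel : avoidingLevel (forbidden S') (m + 5) =
      avoidingLevel (forbidden S) (m + 5) \ {pat (m + 1)} := by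
    ext t
    simp only [avoidingLevel, Set.mem_sdiff, Set.mem_ofPred_eq, Set.mem_singleton_iff, and_assoc]
    exact and_congr_right (avoids_forbidden_iff hlt hm hm')
  have hpat : pat (m + 1) ∈ avoidingLevel (forbidden S) (m + 5) :=
    ⟨by simp, avoids_forbidden_pat hm⟩
  rw [spectrum_eq_of_four_le S (by omega), spectrum_eq_of_four_le S' (by omega), hlevel,
    Set.ncard_sdiff_singleton_add_one hpat (finite_avoidingLevel _ _)]

lemma spectrum_injective : Function.Injective spectrum := by
  classical
  intro S S' h
  by_contra hne
  have hex : ∃ m, ¬ (m ∈ S ↔ m ∈ S') := by simpa [Set.ext_iff] using hne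
  set m := Nat.find hex
  have hm : ¬ (m ∈ S ↔ m ∈ S') := Nat.find_spec hex
  have hlt : ∀ k < m, k ∈ S ↔ k ∈ S' := fun k hk => not_not.mp (Nat.find_min hex hk)
  have hspec := congrFun h (m + 5)
  by_cases hmS : m ∈ S
  · have hmS' : m ∉ S' := fun h' => hm (iff_of_true hmS h')
    have := spectrum_eq_spectrum_add_one (fun k hk => (hlt k hk).symm) hmS' hmS
    omega
  · have hmS' : m ∈ S' := by_contra fun h' => hm (iff_of_false hmS h')
    have := spectrum_eq_spectrum_add_one hlt hmS hmS'
    omega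

end Brack

/-- there are continuum many associative spectra of binary groupoids -/
theorem stmt_18 :
    Cardinal.mk {a : ℕ → ℕ | (∀ n, 1 ≤ a n) ∧ ∃ (A : Type) (op : (Fin 2 → A) → A),
        ∀ n, a n = Nat.card (Quotient (tfSetoid op n))} = Cardinal.continuum := by
  apply le_antisymm
  · calc _ ≤ Cardinal.mk (ℕ → ℕ) := Cardinal.mk_set_le _
      _ = Cardinal.continuum := by simp
  · rw [← Cardinal.mk_set_nat]
    refine Cardinal.mk_le_of_injective (f := fun S => ⟨Brack.spectrum S, ?_, ?_⟩) ?_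
    · exact fun n => Brack.one_le_card_quotient_tfSetoid _ n
    · exact ⟨_, _, fun n => rfl⟩
    · exact fun S S' h => Brack.spectrum_injective (congrArg Subtype.val h)
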